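/- arXiv:1601.04973 — 4 statements merged into one kernel-verified Lean document; each statement's English description precedes it below -/
import Mathlib

section
/- Let C and D be chain complexes of modules over a ring, each equipped with an exhaustive filtration bounded from below, and let f : C → D be a filtered chain map. If the map induced by f on the E₁ pages of the associated spectral sequences (equivalently, on the homology of the associated graded complexes) is an isomorphism, then f is a quasi-isomorphism, i.e., f induces an isomorphism on homology. -/
/-- Spectral sequence comparison: let `C`, `D` be (differential modules arising
from) chain complexes over a ring, each with an increasing, exhaustive
filtration bounded from below, preserved by the differentials, and let
`f : C → D` be a filtered chain map.  If `f` induces an isomorphism on the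
homology of the associated graded complexes (the `E₁` pages, stated here at the
level of elements: surjectivity and injectivity of the induced map on
gr-homology in each filtration degree `p`), then `f` is a quasi-isomorphism:
it induces an isomorphism on homology (again stated at the level of
elements: surjectivity and injectivity of the induced map on homology). -/
theorem filtered_E1_iso_implies_quasiIso
    {R : Type*} [CommRing R]
    {C D : Type*} [AddCommGroup C] [Module R C] [AddCommGroup D] [Module R D]
    (dC : C →ₗ[R] C) (dD : D →ₗ[R] D)
    (hdC : dC ∘ₗ dC = 0) (hdD : dD ∘ₗ dD = 0)
    (FC : ℤ → Submodule R C) (FD : ℤ → Submodule R D)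
    (hFCmono : Monotone FC) (hFDmono : Monotone FD)
    (hFCbdd : ∃ N : ℤ, ∀ p ≤ N, FC p = ⊥)
    (hFDbdd : ∃ N : ℤ, ∀ p ≤ N, FD p = ⊥)
    (hFCexh : ⨆ p, FC p = ⊤) (hFDexh : ⨆ p, FD p = ⊤)
    (hdCF : ∀ p, ∀ x ∈ FC p, dC x ∈ FC p)
    (hdDF : ∀ p, ∀ x ∈ FD p, dD x ∈ FD p)
    (f : C →ₗ[R] D)
    (hchain : f ∘ₗ dC = dD ∘ₗ f)
    (hfilt : ∀ p, ∀ x ∈ FC p, f x ∈ FD p)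
    (hE1surj : ∀ p : ℤ, ∀ x ∈ FD p, dD x ∈ FD (p - 1) →
      ∃ y ∈ FC p, dC y ∈ FC (p - 1) ∧ ∃ w ∈ FD p, f y - x - dD w ∈ FD (p - 1))
    (hE1inj : ∀ p : ℤ, ∀ y ∈ FC p, dC y ∈ FC (p - 1) →
      (∃ w ∈ FD p, f y - dD w ∈ FD (p - 1)) →
      ∃ v ∈ FC p, y - dC v ∈ FC (p - 1)) :
    (∀ x : D, dD x = 0 → ∃ y : C, dC y = 0 ∧ ∃ w : D, f y - x = dD w) ∧
    (∀ y : C, dC y = 0 → (∃ w : D, f y = dD w) → ∃ v : C, y = dC v) := by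
  obtain ⟨N₁, hN₁⟩ := hFCbdd
  obtain ⟨N₂, hN₂⟩ := hFDbdd
  set N := min N₁ N₂ with hNdef
  have hNC : ∀ p ≤ N, FC p = ⊥ := fun p hp => hN₁ p (hp.trans (min_le_left _ _))
  have hND : ∀ p ≤ N, FD p = ⊥ := fun p hp => hN₂ p (hp.trans (min_le_right _ _))
  have hdC2 : ∀ x, dC (dC x) = 0 := fun x => DFunLike.congr_fun hdC x
  have hdD2 : ∀ x, dD (dD x) = 0 := fun x => DFunLike.congr_fun hdD x
  have hcomm : ∀ x, f (dC x) = dD (f x) := fun x => DFunLike.congr_fun hchain x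
  set A : ℤ → Prop := fun p => ∀ x ∈ FD p, dD x = 0 →
      ∃ y ∈ FC p, dC y = 0 ∧ ∃ w ∈ FD p, f y - x = dD w with hAdef
  set B : ℤ → Prop := fun p => ∀ y ∈ FC p, dC y = 0 → ∀ w ∈ FD p, f y = dD w →
      ∃ v ∈ FC p, y = dC v with hBdef
  have base : ∀ p ≤ N, A p ∧ B p := by
    intro p hp
    constructor
    · intro x hx _
      rw [hND p hp, Submodule.mem_bot] at hx
      exact ⟨0, (FC p).zero_mem, by simp, 0, (FD p).zero_mem, by simp [hx]⟩
    · intro y hy _ w _ _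
      rw [hNC p hp, Submodule.mem_bot] at hy
      exact ⟨0, (FC p).zero_mem, by simp [hy]⟩
  have step : ∀ p : ℤ, (A (p - 1) ∧ B (p - 1)) → A p ∧ B p := by
    intro p ⟨ihA, ihB⟩
    have stepB : B p := by
      intro y hy hycyc w hw hfy
      obtain ⟨v, hv, hyv⟩ := hE1inj p y hy
        (by rw [hycyc]; exact (FC (p - 1)).zero_mem)
        ⟨w, hw, by rw [hfy]; simpa using (FD (p - 1)).zero_mem⟩
      -- y' := y - dC v ∈ FC (p-1), a cycle, with f y' = dD (w - f v)
      have hy'cyc : dC (y - dC v) = 0 := by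
        rw [map_sub, hycyc, hdC2]; simp
      have hfy' : f (y - dC v) = dD (w - f v) := by
        rw [map_sub, map_sub, hfy, hcomm]
      have hx0 : w - f v ∈ FD p := (FD p).sub_mem hw (hfilt p v hv)
      have hdx0 : dD (w - f v) ∈ FD (p - 1) := by
        rw [← hfy']
        exact hfilt (p - 1) _ hyv
      obtain ⟨y₁, hy₁, hdy₁, w₁, hw₁, hr⟩ := hE1surj p (w - f v) hx0 hdx0
      -- r := f y₁ - (w - f v) - dD w₁ ∈ FD (p-1)
      -- y₂ := (y - dC v) - dC y₁ ∈ FC (p-1), cycle, f y₂ = dD (-(f y₁ - (w - f v) - dD w₁))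
      have hy₂mem : (y - dC v) - dC y₁ ∈ FC (p - 1) := (FC (p - 1)).sub_mem hyv hdy₁
      have hy₂cyc : dC ((y - dC v) - dC y₁) = 0 := by
        rw [map_sub, hy'cyc, hdC2]; simp
      have hfy₂ : f ((y - dC v) - dC y₁) = dD (-(f y₁ - (w - f v) - dD w₁)) := by
        have h1 : f ((y - dC v) - dC y₁) = dD (w - f v) - dD (f y₁) := by
          rw [map_sub, hfy', hcomm]
        have h2 : dD (-(f y₁ - (w - f v) - dD w₁)) = dD (w - f v) - dD (f y₁) := by
          rw [map_neg, map_sub, map_sub, hdD2]; abel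
        rw [h1, h2]
      obtain ⟨v₁, hv₁, hv₁eq⟩ := ihB ((y - dC v) - dC y₁) hy₂mem hy₂cyc
        (-(f y₁ - (w - f v) - dD w₁)) ((FD (p - 1)).neg_mem hr) hfy₂
      refine ⟨v₁ + y₁ + v, ?_, ?_⟩
      · exact (FC p).add_mem ((FC p).add_mem (hFCmono (by omega) hv₁) hy₁) hv
      · rw [map_add, map_add, ← hv₁eq]; abel
    refine ⟨?_, stepB⟩
    · intro x hx hxcyc
      obtain ⟨y, hy, hdy, w, hw, hz⟩ := hE1surj p x hx
        (by rw [hxcyc]; exact (FD (p - 1)).zero_mem)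
      -- z := f y - x - dD w ∈ FD (p-1); dC y is a cycle with f (dC y) = dD z
      have hfdy : f (dC y) = dD (f y - x - dD w) := by
        rw [hcomm, map_sub, map_sub, hxcyc, hdD2]; simp
      obtain ⟨v, hv, hveq⟩ := ihB (dC y) hdy (hdC2 y) (f y - x - dD w) hz hfdy
      -- u := (f y - x - dD w) - f v ∈ FD (p-1) is a cycle
      have humem : (f y - x - dD w) - f v ∈ FD (p - 1) :=
        (FD (p - 1)).sub_mem hz (hfilt (p - 1) v hv)
      have hucyc : dD ((f y - x - dD w) - f v) = 0 := by
        rw [map_sub, ← hfdy, ← hcomm, ← hveq, sub_self]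
      obtain ⟨c, hc, hccyc, w', hw', hw'eq⟩ := ihA _ humem hucyc
      refine ⟨y - v - c, ?_, ?_, w - w', ?_, ?_⟩
      · exact (FC p).sub_mem ((FC p).sub_mem hy (hFCmono (by omega) hv))
          (hFCmono (by omega) hc)
      · rw [map_sub, map_sub, ← hveq, hccyc]; abel
      · exact (FD p).sub_mem hw (hFDmono (by omega) hw')
      · have : f c - ((f y - x - dD w) - f v) = dD w' := hw'eq
        rw [map_sub, map_sub, map_sub]
        linear_combination (norm := abel) -this
  have all : ∀ p : ℤ, A p ∧ B p := by
    have aux : ∀ n : ℕ, ∀ p : ℤ, p ≤ N + n → A p ∧ B p := by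
      intro n
      induction n with
      | zero => intro p hp; exact base p (by simpa using hp)
      | succ n ih =>
        intro p hp
        rcases le_or_gt p (N + n) with h | h
        · exact ih p h
        · exact step p (ih (p - 1) (by omega))
    intro p
    rcases le_or_gt p N with h | h
    · exact base p h
    · refine aux (p - N).toNat p ?_
      have := Int.self_le_toNat (p - N)
      omega
  constructor
  · intro x hx
    have hxtop : x ∈ ⨆ p, FD p := hFDexh ▸ Submodule.mem_top
    obtain ⟨p, hp⟩ := (Submodule.mem_iSup_of_directed FD hFDmono.directed_le).mp hxtop
    obtain ⟨y, _, hycyc, w, _, heq⟩ := (all p).1 x hp hx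
    exact ⟨y, hycyc, w, heq⟩
  · rintro y hycyc ⟨w, hfw⟩
    have hytop : y ∈ ⨆ p, FC p := hFCexh ▸ Submodule.mem_top
    obtain ⟨p, hp⟩ := (Submodule.mem_iSup_of_directed FC hFCmono.directed_le).mp hytop
    have hwtop : w ∈ ⨆ q, FD q := hFDexh ▸ Submodule.mem_top
    obtain ⟨q, hq⟩ := (Submodule.mem_iSup_of_directed FD hFDmono.directed_le).mp hwtop
    obtain ⟨v, _, hveq⟩ := (all (max p q)).2 y (hFCmono (le_max_left p q) hp) hycyc
      w (hFDmono (le_max_right p q) hq) hfw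
    exact ⟨v, hveq⟩
end

section
/- With notation as in the previous statement: every cycle c in (W, ∂₀) of the form c = ∑_{i=0}^{N} ([w_i, u, i] + [z_i, v, i]), where w_i, z_i ∈ V, is homologous to [w₀, u, 0]; explicitly, if ∂₀ c = 0 then d z_N = 0, d z_{i−1} = w_i for 1 ≤ i ≤ N, and b = ∑_{i=0}^{N} [z_i, u, i+1] satisfies ∂₀ b + c = [w₀, u, 0]. -/
/-!
Read off the `v`-component at each level `k` of the cycle equation `∂₀ c = 0`: the only
contributions come from `[z_k, v, k]` and from `[w_{k+1}, u, k+1]`, so `d z_k + w_{k+1} = 0`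
(with `w_{N+1} = 0`). Given these relations, `∂₀ b = ∑ ([d z_i, u, i+1] + [z_i, v, i])`
cancels the `v`-part of `c` and the `u`-part of `c` above level `0`, since in characteristic `2`
every element is its own negative.
-/

open Finset

theorem add_self_eq_zero_of_charP_two (R : Type*) {M : Type*} [Semiring R] [CharP R 2]
    [AddCommMonoid M] [Module R M] (x : M) : x + x = 0 := by
  rw [← two_smul R x, CharTwo.two_eq_zero, zero_smul]

theorem eq_of_add_eq_zero_of_charP_two (R : Type*) {M : Type*} [Semiring R] [CharP R 2]
    [AddCommMonoid M] [Module R M] {x y : M} (h : x + y = 0) : x = y := by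
  rw [← add_zero x, ← add_self_eq_zero_of_charP_two R y, ← add_assoc, h, zero_add]

namespace Finsupp

variable {R J ι : Type*} [Semiring R]

noncomputable def slice (a : ι) : (J × ι →₀ R) →ₗ[R] (J →₀ R) :=
  lcomapDomain (·, a) (Prod.mk_left_injective a)

theorem slice_mapDomain [DecidableEq ι] (a b : ι) (x : J →₀ R) :
    slice b (mapDomain (·, a) x) = if a = b then x else 0 := by
  split_ifs with hab
  · subst hab
    exact comapDomain_mapDomain _ (Prod.mk_left_injective a) x
  · ext j
    refine mapDomain_of_notMem_range x _ ?_
    rintro ⟨j', hj'⟩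
    exact hab (Prod.ext_iff.mp hj').2

theorem eq_lmapDomain_of_apply_single_one {e : (J →₀ R) →ₗ[R] (J × ι →₀ R)} {a : ι}
    (he : ∀ j, e (single j 1) = single (j, a) 1) : e = lmapDomain R R (·, a) := by
  ext j
  simp [he]

theorem slice_apply_of_apply_single_one [DecidableEq ι] {e : (J →₀ R) →ₗ[R] (J × ι →₀ R)}
    {a : ι} (he : ∀ j, e (single j 1) = single (j, a) 1) (b : ι) (x : J →₀ R) :
    slice b (e x) = if a = b then x else 0 := by
  rw [eq_lmapDomain_of_apply_single_one he, lmapDomain_apply, slice_mapDomain]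

end Finsupp

open Finsupp

section ChainComplex

variable {J R : Type*} [Semiring R] {D : (J →₀ R) →ₗ[R] (J →₀ R)}
  {emb : Bool → ℕ → (J →₀ R) →ₗ[R] (J × Bool × ℕ →₀ R)}
  {d0 : (J × Bool × ℕ →₀ R) →ₗ[R] (J × Bool × ℕ →₀ R)}

theorem slice_v_d0_emb_u (hemb : ∀ s i j, emb s i (single j 1) = single (j, s, i) 1)
    (hd0u : ∀ i x, d0 (emb true i x) =
      emb true i (D x) + (if i = 0 then 0 else emb false (i - 1) x))
    (i k : ℕ) (x : J →₀ R) :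
    slice (false, k) (d0 (emb true i x)) = if i = k + 1 then x else 0 := by
  rw [hd0u, map_add, slice_apply_of_apply_single_one (hemb true i)]
  split_ifs <;> simp_all [slice_apply_of_apply_single_one (hemb false _)]; omega

theorem slice_v_d0_emb_v (hemb : ∀ s i j, emb s i (single j 1) = single (j, s, i) 1)
    (hd0v : ∀ i x, d0 (emb false i x) = emb false i (D x)) (i k : ℕ) (x : J →₀ R) :
    slice (false, k) (d0 (emb false i x)) = if i = k then D x else 0 := by
  simp [hd0v, slice_apply_of_apply_single_one (hemb false i)]

theorem slice_v_d0_sum (hemb : ∀ s i j, emb s i (single j 1) = single (j, s, i) 1)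
    (hd0u : ∀ i x, d0 (emb true i x) =
      emb true i (D x) + (if i = 0 then 0 else emb false (i - 1) x))
    (hd0v : ∀ i x, d0 (emb false i x) = emb false i (D x)) (N k : ℕ) (w z : ℕ → J →₀ R) :
    slice (false, k) (d0 (∑ i ∈ range (N + 1), (emb true i (w i) + emb false i (z i)))) =
      (if k + 1 < N + 1 then w (k + 1) else 0) + (if k < N + 1 then D (z k) else 0) := by
  simp only [map_sum, map_add, slice_v_d0_emb_u hemb hd0u, slice_v_d0_emb_v hemb hd0v,
    sum_add_distrib, Finset.sum_ite_eq', mem_range]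

theorem d0_sum_emb_u_succ
    (hd0u : ∀ i x, d0 (emb true i x) =
      emb true i (D x) + (if i = 0 then 0 else emb false (i - 1) x))
    (s : Finset ℕ) (z : ℕ → J →₀ R) :
    d0 (∑ i ∈ s, emb true (i + 1) (z i)) =
      ∑ i ∈ s, (emb true (i + 1) (D (z i)) + emb false i (z i)) := by
  simp [hd0u]

theorem d0_sum_emb_u_succ_add_cycle [CharP R 2]
    (hd0u : ∀ i x, d0 (emb true i x) =
      emb true i (D x) + (if i = 0 then 0 else emb false (i - 1) x))
    (N : ℕ) (w z : ℕ → J →₀ R) (hzN : D (z N) = 0) (hw : ∀ i < N, D (z i) = w (i + 1)) :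
    d0 (∑ i ∈ range (N + 1), emb true (i + 1) (z i)) +
      ∑ i ∈ range (N + 1), (emb true i (w i) + emb false i (z i)) = emb true 0 (w 0) := by
  have hDz : ∑ i ∈ range (N + 1), emb true (i + 1) (D (z i)) =
      ∑ i ∈ range N, emb true (i + 1) (w (i + 1)) := by
    rw [sum_range_succ, hzN, map_zero, add_zero]
    exact sum_congr rfl fun i hi ↦ by rw [hw i (mem_range.mp hi)]
  rw [d0_sum_emb_u_succ hd0u, sum_add_distrib, sum_add_distrib, hDz,
    sum_range_succ' (fun i ↦ emb true i (w i))]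
  set U := ∑ i ∈ range N, emb true (i + 1) (w (i + 1))
  set V := ∑ i ∈ range (N + 1), emb false i (z i)
  calc U + V + (U + emb true 0 (w 0) + V) = (U + U) + (V + V) + emb true 0 (w 0) := by abel
    _ = emb true 0 (w 0) := by
      rw [add_self_eq_zero_of_charP_two R, add_self_eq_zero_of_charP_two R, zero_add, zero_add]

end ChainComplex

theorem cycle_homologous_to_u_level_zero_general
    {J : Type*}
    {Λ : Type*} [Field Λ] [CharP Λ 2]
    (D : (J →₀ Λ) →ₗ[Λ] (J →₀ Λ))
    (emb : Bool → ℕ → ((J →₀ Λ) →ₗ[Λ] ((J × Bool × ℕ) →₀ Λ)))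
    (hemb : ∀ (s : Bool) (i : ℕ) (j : J),
      emb s i (Finsupp.single j 1) = Finsupp.single (j, s, i) 1)
    (d0 : ((J × Bool × ℕ) →₀ Λ) →ₗ[Λ] ((J × Bool × ℕ) →₀ Λ))
    (hd0u : ∀ (i : ℕ) (x : J →₀ Λ), d0 (emb true i x) =
      emb true i (D x) + (if i = 0 then 0 else emb false (i - 1) x))
    (hd0v : ∀ (i : ℕ) (x : J →₀ Λ), d0 (emb false i x) = emb false i (D x))
    (N : ℕ) (w z : ℕ → (J →₀ Λ))
    (hcycle : d0 (∑ i ∈ Finset.range (N + 1),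
      (emb true i (w i) + emb false i (z i))) = 0) :
    D (z N) = 0 ∧
    (∀ i, 1 ≤ i → i ≤ N → D (z (i - 1)) = w i) ∧
    d0 (∑ i ∈ Finset.range (N + 1), emb true (i + 1) (z i)) +
      (∑ i ∈ Finset.range (N + 1), (emb true i (w i) + emb false i (z i))) =
      emb true 0 (w 0) := by
  have hlevel (k : ℕ) :
      (if k + 1 < N + 1 then w (k + 1) else 0) + (if k < N + 1 then D (z k) else 0) = 0 := by
    rw [← slice_v_d0_sum hemb hd0u hd0v, hcycle, map_zero]
  have hzN : D (z N) = 0 := by simpa using hlevel N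
  have hw (k : ℕ) (hk : k < N) : D (z k) = w (k + 1) := by
    refine (eq_of_add_eq_zero_of_charP_two Λ ?_).symm
    simpa [hk, hk.trans (Nat.lt_succ_self N)] using hlevel k
  refine ⟨hzN, fun i hi hiN ↦ ?_, d0_sum_emb_u_succ_add_cycle hd0u N w z hzN hw⟩
  obtain ⟨k, rfl⟩ := Nat.exists_eq_add_of_le' hi
  exact hw k hiN

/-- With `W` the free `Λ`-module on generators `[x, u, i]`, `[x, v, i]`
(`x` ranging over a basis of the finite-dimensional complex `(V, d)` over a
field `Λ` of characteristic 2, extended `Λ`-linearly in the first slot via the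
embeddings `emb s i`, with `u = true`, `v = false`), and differential
`d₀[x,u,i] = [dx,u,i] + [x,v,i-1]` (`[·,v,-1] = 0`), `d₀[x,v,i] = [dx,v,i]`:
every `d₀`-cycle `c = ∑_{i=0}^N ([w_i,u,i] + [z_i,v,i])` satisfies
`d z_N = 0`, `d z_{i-1} = w_i` for `1 ≤ i ≤ N`, and
`b = ∑_{i=0}^N [z_i, u, i+1]` satisfies `d₀ b + c = [w₀, u, 0]`;
in particular `c` is homologous to `[w₀, u, 0]`. -/
theorem cycle_homologous_to_u_level_zero
    {J : Type*} [Fintype J] [DecidableEq J]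
    {Λ : Type*} [Field Λ] [CharP Λ 2]
    (D : (J →₀ Λ) →ₗ[Λ] (J →₀ Λ))
    (emb : Bool → ℕ → ((J →₀ Λ) →ₗ[Λ] ((J × Bool × ℕ) →₀ Λ)))
    (hemb : ∀ (s : Bool) (i : ℕ) (j : J),
      emb s i (Finsupp.single j 1) = Finsupp.single (j, s, i) 1)
    (d0 : ((J × Bool × ℕ) →₀ Λ) →ₗ[Λ] ((J × Bool × ℕ) →₀ Λ))
    (hd0u : ∀ (i : ℕ) (x : J →₀ Λ), d0 (emb true i x) =
      emb true i (D x) + (if i = 0 then 0 else emb false (i - 1) x))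
    (hd0v : ∀ (i : ℕ) (x : J →₀ Λ), d0 (emb false i x) = emb false i (D x))
    (N : ℕ) (w z : ℕ → (J →₀ Λ))
    (hcycle : d0 (∑ i ∈ Finset.range (N + 1),
      (emb true i (w i) + emb false i (z i))) = 0) :
    D (z N) = 0 ∧
    (∀ i, 1 ≤ i → i ≤ N → D (z (i - 1)) = w i) ∧
    d0 (∑ i ∈ Finset.range (N + 1), emb true (i + 1) (z i)) +
      (∑ i ∈ Finset.range (N + 1), (emb true i (w i) + emb false i (z i))) =
      emb true 0 (w 0) :=
  cycle_homologous_to_u_level_zero_general D emb hemb d0 hd0u hd0v N w z hcycle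
end

section
/- Let K be a smoothly slice knot in S³ with maximal Thurston–Bennequin number maxtb(K) = −1. Then the (3,2)-cable of K satisfies maxtb(C_{3,2}(K)) = 1. -/
/-- If `K` is a smoothly slice knot with `maxtb(K) = −1`, then its `(3,2)`-cable
satisfies `maxtb(C_{3,2}(K)) = 1`.  Background facts taken as hypotheses:
the Lidman–Sivek cabling bound `maxtb(C_{3,2}(K)) ≥ 1` when `maxtb(K) = −1`,
the slice-torus bound `maxtb(J) ≤ 2τ(J) − 1`, concordance invariance of `τ`,
`τ(trefoil) = 1`, and that `C_{3,2}(K)` is concordant to the trefoil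
`C_{3,2}(U)` when `K` is slice. -/
theorem cable_maxtb_one {Knot : Type*}
    (maxtb τ : Knot → ℤ) (cable32 : Knot → Knot) (U : Knot)
    (Slice : Knot → Prop) (Concordant : Knot → Knot → Prop)
    (hLS : ∀ K : Knot, maxtb K = -1 → 1 ≤ maxtb (cable32 K))
    (hτbound : ∀ J : Knot, maxtb J ≤ 2 * τ J - 1)
    (hconc : ∀ K : Knot, Slice K → Concordant (cable32 K) (cable32 U))
    (hτconc : ∀ J J' : Knot, Concordant J J' → τ J = τ J')
    (hτtref : τ (cable32 U) = 1)
    (K : Knot) (hK : Slice K) (htb : maxtb K = -1) :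
    maxtb (cable32 K) = 1 := by
  have h1 := hLS K htb
  have h2 := hτbound (cable32 K)
  have h3 := hτconc _ _ (hconc K hK)
  omega
end

section
/- Let K be a smoothly slice knot with maxtb(K) = −1. Then the iterated cable C_{3,2;3,2}(K) := C_{3,2}(C_{3,2}(K)) satisfies maxtb(C_{3,2;3,2}(K)) = 6 and maxsl(C_{3,2;3,2}(K)) = 7, and there is a Legendrian representative with (tb, r) = (6, −1) whose transverse pushoff realizes sl = 7. -/
/-- If `K` is a smoothly slice knot with `maxtb(K) = −1`, then the iterated
cable `T = C_{3,2;3,2}(K)` satisfies `maxtb(T) = 6` and `maxsl(T) = 7`, and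
there is a Legendrian representative with `(tb, r) = (6, −1)` (whose transverse
pushoff, with `sl = tb − r = 7`, realizes `maxsl`).  Background facts taken as
hypotheses: the Lidman–Sivek cabling bounds, the slice-torus bounds
`maxtb ≤ 2τ − 1` and `maxsl ≤ 2τ − 1`, concordance invariance of `τ`,
`τ(C_{3,2}(U)) = 1`, `τ(C_{3,2;3,2}(U)) = 4`, the parity of rotation numbers of
`tb = 6` representatives, and invariance of representatives under orientation
reversal (`r ↦ −r`).  `hasLeg K t r` means the smooth knot type `K` has a
Legendrian representative with Thurston–Bennequin number `t` and rotation
number `r`, and `t − r ≤ maxsl K` records the self-linking of its transverse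
pushoff. -/
theorem iterated_cable_maxtb_maxsl {Knot : Type*}
    (maxtb maxsl τ : Knot → ℤ) (cable32 : Knot → Knot) (U : Knot)
    (Slice : Knot → Prop) (Concordant : Knot → Knot → Prop)
    (hasLeg : Knot → ℤ → ℤ → Prop)
    (htb_le : ∀ (K : Knot) (t r : ℤ), hasLeg K t r → t ≤ maxtb K)
    (htb_max : ∀ K : Knot, ∃ r : ℤ, hasLeg K (maxtb K) r)
    (hsl_le : ∀ (K : Knot) (t r : ℤ), hasLeg K t r → t - r ≤ maxsl K)
    (hrev : ∀ (K : Knot) (t r : ℤ), hasLeg K t r → hasLeg K t (-r))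
    (hτbound_tb : ∀ J : Knot, maxtb J ≤ 2 * τ J - 1)
    (hτbound_sl : ∀ J : Knot, maxsl J ≤ 2 * τ J - 1)
    (hτconc : ∀ J J' : Knot, Concordant J J' → τ J = τ J')
    (K : Knot) (hK : Slice K) (htbK : maxtb K = -1)
    (hLS1 : maxtb K = -1 → 1 ≤ maxtb (cable32 K))
    (hconc1 : Concordant (cable32 K) (cable32 U))
    (hτtref : τ (cable32 U) = 1)
    (hLS2 : maxtb (cable32 K) = 1 → maxtb (cable32 (cable32 K)) = 6)
    (hconc2 : Concordant (cable32 (cable32 K)) (cable32 (cable32 U)))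
    (hτU : τ (cable32 (cable32 U)) = 4)
    (hparity : ∀ r : ℤ, hasLeg (cable32 (cable32 K)) 6 r → Odd r) :
    maxtb (cable32 (cable32 K)) = 6 ∧
    maxsl (cable32 (cable32 K)) = 7 ∧
    hasLeg (cable32 (cable32 K)) 6 (-1) := by
  have h1 : maxtb (cable32 K) = 1 := by
    have := hτbound_tb (cable32 K)
    rw [hτconc _ _ hconc1, hτtref] at this
    have := hLS1 htbK
    omega
  have hT : maxtb (cable32 (cable32 K)) = 6 := hLS2 h1
  have hsl7 : maxsl (cable32 (cable32 K)) ≤ 7 := by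
    have := hτbound_sl (cable32 (cable32 K))
    rw [hτconc _ _ hconc2, hτU] at this
    omega
  obtain ⟨r, hr⟩ := htb_max (cable32 (cable32 K))
  rw [hT] at hr
  have hodd := hparity r hr
  have h2 := hsl_le _ _ _ hr
  have h3 := hsl_le _ _ _ (hrev _ _ _ hr)
  have hr1 : r = 1 ∨ r = -1 := by
    rcases hodd with ⟨k, hk⟩; omega
  have hleg : hasLeg (cable32 (cable32 K)) 6 (-1) := by
    rcases hr1 with h | h
    · simpa [h] using hrev _ _ _ hr
    · rwa [h] at hr
  have h4 := hsl_le _ _ _ hleg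
  exact ⟨hT, by omega, hleg⟩
end
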